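/- Let A be a unital associative k-algebra, Δ ∈ A, Λ = diag(1, Δ) ∈ Mat_2(A), and let M̂_Λ = k ⊕ Mat_2(A) be the unitization of the homotope M_Λ. Set e = (0, diag(1,0)) and ε = (1, 0) − e in M̂_Λ. Then e and ε are orthogonal idempotents of M̂_Λ summing to the unit, and the corner ε M̂_Λ ε is isomorphic to the unitization Â_Δ = k ⊕ A of the homotope A_Δ: there is a k-linear bijection f from k ⊕ A onto the subspace {ε Z ε : Z ∈ M̂_Λ} of M̂_Λ such that f((1,0)) = ε and f(zw) = f(z)f(w) for all z, w ∈ Â_Δ (products taken in Â_Δ and M̂_Λ respectively). -/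

import Mathlib

/-- The multiplication of the unitization `k ⊕ N` of the homotope of
`Mat₂(A)` at `Λ`: `(α, n)(β, n') = (αβ, αn' + βn + nΛn')`. -/
def umulM {k A : Type*} [Field k] [Ring A] [Algebra k A]
    (Λ : Matrix (Fin 2) (Fin 2) A)
    (z w : k × Matrix (Fin 2) (Fin 2) A) : k × Matrix (Fin 2) (Fin 2) A :=
  (z.1 * w.1, z.1 • w.2 + w.1 • z.2 + z.2 * Λ * w.2)

/-- The multiplication of the unitization `k ⊕ A` of the homotope `A_Δ`:
`(α, n)(β, n') = (αβ, αn' + βn + nΔn')`. -/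
def umulA {k A : Type*} [Field k] [Ring A] [Algebra k A]
    (Δ : A) (z w : k × A) : k × A :=
  (z.1 * w.1, z.1 • w.2 + w.1 • z.2 + z.2 * Δ * w.2)

/-- The idempotent `e = (0, E₁₁)` of the unitization `M̂_Λ = k ⊕ Mat₂(A)`. -/
def eIdem (k A : Type*) [Field k] [Ring A] [Algebra k A] :
    k × Matrix (Fin 2) (Fin 2) A :=
  (0, Matrix.single 0 0 1)

/-- The idempotent `ε = 1 − e` of the unitization `M̂_Λ = k ⊕ Mat₂(A)`. -/
def epsIdem (k A : Type*) [Field k] [Ring A] [Algebra k A] :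
    k × Matrix (Fin 2) (Fin 2) A :=
  ((1 : k), 0) - eIdem k A

def fmap (k A : Type*) [Field k] [Ring A] [Algebra k A] :
    (k × A) →ₗ[k] (k × Matrix (Fin 2) (Fin 2) A) where
  toFun z := (z.1, Matrix.single 1 1 z.2 - z.1 • Matrix.single 0 0 (1 : A))
  map_add' z w := by
    refine Prod.ext rfl ?_
    ext i j
    fin_cases i <;> fin_cases j <;>
      simp [Matrix.single, Matrix.of_apply, add_smul] <;> abel
  map_smul' c z := by
    refine Prod.ext rfl ?_
    ext i j
    fin_cases i <;> fin_cases j <;>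
      simp [Matrix.single, Matrix.of_apply, smul_smul, mul_comm]

@[simp] lemma fmap_apply {k A : Type*} [Field k] [Ring A] [Algebra k A] (z : k × A) :
    fmap k A z
      = (z.1, Matrix.single 1 1 z.2 - z.1 • Matrix.single 0 0 (1 : A)) :=
  rfl

lemma corner_eq {k A : Type*} [Field k] [Ring A] [Algebra k A] (Δ : A)
    (Z : k × Matrix (Fin 2) (Fin 2) A) :
    umulM (Matrix.diagonal ![1, Δ]) (umulM (Matrix.diagonal ![1, Δ]) (epsIdem k A) Z)
      (epsIdem k A) = fmap k A (Z.1, Z.2 1 1) := by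
  obtain ⟨γ, M⟩ := Z
  refine Prod.ext (by simp [umulM, epsIdem, eIdem]) ?_
  show _ = Matrix.single 1 1 (M 1 1) - γ • Matrix.single 0 0 (1 : A)
  ext i j
  fin_cases i <;> fin_cases j <;>
    simp [fmap, umulM, epsIdem, eIdem, Matrix.mul_apply, Fin.sum_univ_two,
      Matrix.single, Matrix.diagonal, Matrix.of_apply,
      smul_mul_assoc, mul_smul_comm, smul_smul, mul_comm] <;>
    abel

/-- For `Λ = diag(1, Δ)`: `e` and `ε` are orthogonal idempotents of `M̂_Λ`
summing to the unit, and the corner `ε M̂_Λ ε` is isomorphic to the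
unitization `Â_Δ = k ⊕ A` of the homotope `A_Δ`. -/
theorem corner_of_unitized_homotope
    {k A : Type*} [Field k] [Ring A] [Algebra k A] (Δ : A) :
    umulM (Matrix.diagonal ![1, Δ]) (eIdem k A) (eIdem k A) = eIdem k A ∧
    umulM (Matrix.diagonal ![1, Δ]) (epsIdem k A) (epsIdem k A) = epsIdem k A ∧
    umulM (Matrix.diagonal ![1, Δ]) (eIdem k A) (epsIdem k A) = 0 ∧
    umulM (Matrix.diagonal ![1, Δ]) (epsIdem k A) (eIdem k A) = 0 ∧
    eIdem k A + epsIdem k A = ((1 : k), 0) ∧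
    ∃ f : (k × A) →ₗ[k] (k × Matrix (Fin 2) (Fin 2) A),
      Function.Injective f ∧
      Set.range f = {w | ∃ Z : k × Matrix (Fin 2) (Fin 2) A,
        w = umulM (Matrix.diagonal ![1, Δ])
          (umulM (Matrix.diagonal ![1, Δ]) (epsIdem k A) Z) (epsIdem k A)} ∧
      f ((1 : k), (0 : A)) = epsIdem k A ∧
      ∀ z w : k × A, f (umulA Δ z w)
        = umulM (Matrix.diagonal ![1, Δ]) (f z) (f w) := by
  have hmat : ∀ P Q : k × Matrix (Fin 2) (Fin 2) A, P.1 = Q.1 → P.2 = Q.2 → P = Q :=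
    fun P Q h1 h2 => Prod.ext h1 h2
  refine ⟨?_, ?_, ?_, ?_, ?_, fmap k A, ?_, ?_, ?_, ?_⟩
  · refine Prod.ext (by simp [umulM, eIdem]) ?_
    ext i j
    fin_cases i <;> fin_cases j <;>
      simp [umulM, eIdem, Matrix.mul_apply, Fin.sum_univ_two,
        Matrix.single, Matrix.diagonal, Matrix.of_apply]
  · refine Prod.ext (by simp [umulM, epsIdem, eIdem]) ?_
    ext i j
    fin_cases i <;> fin_cases j <;>
      simp [umulM, epsIdem, eIdem, Matrix.mul_apply, Fin.sum_univ_two,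
        Matrix.single, Matrix.diagonal, Matrix.of_apply] <;> abel
  · refine Prod.ext (by simp [umulM, epsIdem, eIdem]) ?_
    ext i j
    fin_cases i <;> fin_cases j <;>
      simp [umulM, epsIdem, eIdem, Matrix.mul_apply, Fin.sum_univ_two,
        Matrix.single, Matrix.diagonal, Matrix.of_apply] <;> abel
  · refine Prod.ext (by simp [umulM, epsIdem, eIdem]) ?_
    ext i j
    fin_cases i <;> fin_cases j <;>
      simp [umulM, epsIdem, eIdem, Matrix.mul_apply, Fin.sum_univ_two,
        Matrix.single, Matrix.diagonal, Matrix.of_apply] <;> abel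
  · simp [eIdem, epsIdem]
  · intro z w h
    simp only [fmap_apply, Prod.mk.injEq] at h
    have h2 := congrFun (congrFun h.2 1) 1
    simp [Matrix.single, Matrix.of_apply] at h2
    exact Prod.ext h.1 h2
  · ext w
    constructor
    · rintro ⟨z, rfl⟩
      refine ⟨fmap k A z, ?_⟩
      rw [corner_eq]
      congr 1
      simp [Matrix.single, Matrix.of_apply]
    · rintro ⟨Z, rfl⟩
      exact ⟨(Z.1, Z.2 1 1), (corner_eq Δ Z).symm⟩
  · refine Prod.ext (by simp [epsIdem, eIdem]) ?_
    show Matrix.single 1 1 (0:A) - (1:k) • Matrix.single 0 0 (1 : A)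
      = (epsIdem k A).2
    ext i j
    fin_cases i <;> fin_cases j <;>
      simp [epsIdem, eIdem, Matrix.single, Matrix.of_apply]
  · intro z w
    obtain ⟨α, a⟩ := z
    obtain ⟨β, b⟩ := w
    refine Prod.ext rfl ?_
    ext i j
    fin_cases i <;> fin_cases j <;>
      simp [fmap, umulA, umulM, Matrix.mul_apply, Fin.sum_univ_two,
        Matrix.single, Matrix.diagonal, Matrix.of_apply,
        smul_mul_assoc, mul_smul_comm, smul_smul, mul_comm]
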